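/- For relations β and Eℛ on a common type with ∼ = E* an equivalence commuting with β (∼∘β ⊆ β∘∼), if R' = β ∪ R is ∼-confluent on ∼-classes, then ▷ = β ∪ (∼∘R) is ∼-confluent on ∼-classes. (Uses: ▷* ⊆ (∼∘R')* and (∼∘R')* ⊆ ▷*∘∼, plus the lemma that ∼-confluence on ∼-classes of a relation X implies ∼-confluence on ∼-classes of ∼∘X.) -/

import Mathlib

def Comp {T : Type*} (r s : T → T → Prop) : T → T → Prop :=
  fun a b => ∃ c, r a c ∧ s c b

/-- `∼`-confluence on `∼`-classes of a relation `X`. -/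
def SimConflOnClasses {T : Type*} (sim X : T → T → Prop) : Prop :=
  ∀ u t u' v : T, Relation.ReflTransGen X u t → sim u u' → Relation.ReflTransGen X u' v →
    ∃ w w', Relation.ReflTransGen X t w ∧ sim w w' ∧ Relation.ReflTransGen X v w'

/-! The relation `r = ∼ ∘ X* ∘ ∼` contains `∼`, and `∼`-confluence of `X` on classes means
that two `r`-steps from a common point meet in one `r`-step each. So `r*` is confluent by the
Church–Rosser lemma, which makes `r` `∼`-confluent on classes. Confluence on classes transfers
between relations `Y`, `Z` with `Z* ⊆ Y*` and `Y* ⊆ Z* ∘ ∼`; these inclusions hold between `r` and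
`∼ ∘ X`, and, since `∼` commutes with `β`, between `∼ ∘ (β ∪ R)` and `β ∪ (∼ ∘ R)`. -/

section SimConfluence

open Relation (ReflTransGen ReflGen church_rosser)

variable {T : Type*} {sim W r : T → T → Prop}

theorem comp_reflTransGen_le_reflTransGen_comp (hW : Comp sim W ≤ Comp W sim) :
    Comp sim (ReflTransGen W) ≤ Comp (ReflTransGen W) sim := by
  rintro a c ⟨b, hab, hbc⟩
  induction hbc with
  | refl => exact ⟨a, .refl, hab⟩
  | tail _ hcd ih =>
    obtain ⟨e, hae, hec⟩ := ih
    obtain ⟨f, hef, hfd⟩ := hW _ _ ⟨_, hec, hcd⟩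
    exact ⟨f, hae.tail hef, hfd⟩

theorem reflTransGen_le_reflTransGen_comp (hsim : Equivalence sim)
    (hW : Comp sim W ≤ Comp W sim) (hr : r ≤ Comp (ReflTransGen W) sim) :
    ReflTransGen r ≤ Comp (ReflTransGen W) sim := by
  intro a b hab
  induction hab with
  | refl => exact ⟨a, .refl, hsim.refl a⟩
  | tail _ hcd ih =>
    obtain ⟨e, hae, hec⟩ := ih
    obtain ⟨f, hcf, hfd⟩ := hr _ _ hcd
    obtain ⟨g, heg, hgf⟩ := comp_reflTransGen_le_reflTransGen_comp hW _ _ ⟨_, hec, hcf⟩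
    exact ⟨g, hae.trans heg, hsim.trans hgf hfd⟩

theorem simConflOnClasses_of_diamond (hrefl : ∀ a, sim a a)
    (hdiamond : ∀ a b c, r a b → r a c → ∃ d, ReflGen r b d ∧ ReflTransGen r c d)
    (hsim_le : sim ≤ r) : SimConflOnClasses sim r := by
  intro u t u' v hut huu' hu'v
  obtain ⟨d, htd, hvd⟩ := church_rosser hdiamond hut (.head (hsim_le _ _ huu') hu'v)
  exact ⟨d, d, htd, hrefl d, hvd⟩

namespace SimConflOnClasses

variable {X Y Z : T → T → Prop}

theorem of_reflTransGen_le (hsim : Equivalence sim) (hY : SimConflOnClasses sim Y)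
    (hZY : ReflTransGen Z ≤ ReflTransGen Y) (hYZ : ReflTransGen Y ≤ Comp (ReflTransGen Z) sim) :
    SimConflOnClasses sim Z := by
  intro u t u' v hut huu' hu'v
  obtain ⟨w, w', htw, hww', hvw'⟩ := hY u t u' v (hZY _ _ hut) huu' (hZY _ _ hu'v)
  obtain ⟨a, hta, haw⟩ := hYZ _ _ htw
  obtain ⟨a', hva', ha'w'⟩ := hYZ _ _ hvw'
  exact ⟨a, a', hta, hsim.trans haw (hsim.trans hww' (hsim.symm ha'w')), hva'⟩

theorem comp (hsim : Equivalence sim) (hX : SimConflOnClasses sim X) :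
    SimConflOnClasses sim (Comp sim X) := by
  set r := Comp sim (Comp (ReflTransGen X) sim)
  have hdiamond : ∀ a b c, r a b → r a c → ∃ d, ReflGen r b d ∧ ReflTransGen r c d := by
    rintro a b c ⟨a₁, haa₁, b₁, hab₁, hb₁b⟩ ⟨a₂, haa₂, c₁, hac₁, hc₁c⟩
    obtain ⟨w, w', hb₁w, hww', hc₁w'⟩ :=
      hX a₁ b₁ a₂ c₁ hab₁ (hsim.trans (hsim.symm haa₁) haa₂) hac₁
    exact ⟨w, .single ⟨b₁, hsim.symm hb₁b, w, hb₁w, hsim.refl w⟩,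
      .single ⟨c₁, hsim.symm hc₁c, w', hc₁w', hsim.symm hww'⟩⟩
  have hr : SimConflOnClasses sim r :=
    simConflOnClasses_of_diamond hsim.refl hdiamond
      fun a b hab => ⟨a, hsim.refl a, a, .refl, hab⟩
  have hX_le : X ≤ Comp sim X := fun a b hab => ⟨a, hsim.refl a, hab⟩
  have hcomm : Comp sim (Comp sim X) ≤ Comp (Comp sim X) sim :=
    fun a b ⟨c, hac, d, hcd, hdb⟩ => ⟨b, ⟨d, hsim.trans hac hcd, hdb⟩, hsim.refl b⟩
  refine hr.of_reflTransGen_le hsim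
    (ReflTransGen.mono fun a b ⟨c, hac, hcb⟩ => ⟨c, hac, b, .single hcb, hsim.refl b⟩)
    (reflTransGen_le_reflTransGen_comp hsim hcomm ?_)
  rintro a b ⟨a₁, haa₁, b₁, hab₁, hb₁b⟩
  obtain ⟨d, had, hdb₁⟩ :=
    comp_reflTransGen_le_reflTransGen_comp hcomm _ _ ⟨a₁, haa₁, ReflTransGen.mono hX_le _ _ hab₁⟩
  exact ⟨d, had, hsim.trans hdb₁ hb₁b⟩

end SimConflOnClasses

end SimConfluence

/-- With `E` symmetric, `∼ = E*` commuting with `β`: if `R' = β ∪ R` is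
`∼`-confluent on `∼`-classes, then `▷ = β ∪ (∼∘R)` is `∼`-confluent on `∼`-classes. -/
theorem stmt15 {T : Type*} (β R E : T → T → Prop)
    (hsym : ∀ a b : T, E a b → E b a)
    (sim : T → T → Prop) (hsim : sim = Relation.ReflTransGen E)
    (hcomm : ∀ t u v : T, sim t u → β u v → ∃ w, β t w ∧ sim w v)
    (hconf : SimConflOnClasses sim (fun a b => β a b ∨ R a b)) :
    SimConflOnClasses sim (fun a b => β a b ∨ Comp sim R a b) := by
  set R' : T → T → Prop := fun a b => β a b ∨ R a b
  set tri : T → T → Prop := fun a b => β a b ∨ Comp sim R a b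
  have hequiv : Equivalence sim := by
    have : Std.Symm E := ⟨hsym⟩
    exact hsim ▸ Relation.EqvGen.eqvGen_eq_reflTransGen (r := E) ▸ Relation.EqvGen.is_equivalence E
  have htri_le : tri ≤ Comp sim R' := by
    rintro a b (hab | ⟨c, hac, hcb⟩)
    · exact ⟨a, hequiv.refl a, .inl hab⟩
    · exact ⟨c, hac, .inr hcb⟩
  have hcomm_tri : Comp sim tri ≤ Comp tri sim := by
    rintro a b ⟨c, hac, hcb | ⟨d, hcd, hdb⟩⟩
    · obtain ⟨w, haw, hwb⟩ := hcomm a c b hac hcb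
      exact ⟨w, .inl haw, hwb⟩
    · exact ⟨b, .inr ⟨d, hequiv.trans hac hcd, hdb⟩, hequiv.refl b⟩
  have hR'_le : Comp sim R' ≤ Comp (Relation.ReflTransGen tri) sim := by
    rintro a b ⟨c, hac, hcb | hcb⟩
    · obtain ⟨w, haw, hwb⟩ := hcomm a c b hac hcb
      exact ⟨w, .single (.inl haw), hwb⟩
    · exact ⟨b, .single (.inr ⟨c, hac, hcb⟩), hequiv.refl b⟩
  exact (hconf.comp hequiv).of_reflTransGen_le hequiv (Relation.ReflTransGen.mono htri_le)
    (reflTransGen_le_reflTransGen_comp hequiv hcomm_tri hR'_le)
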